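/- Let x1 ∈ (0,1) and x2 ∈ (1,∞) satisfy x1·e^{1-x1} = x2·e^{1-x2}, and let c ≤ -1/3. Then 1 - x1·x2 + c(1 - x1)(x2 - 1) < 0. -/

import Mathlib

/-! The constraint says that the logarithmic mean of `x1` and `x2` is `1`: with `t = x2 - x1` and
`E = exp t` one gets `x1 = t / (E - 1)` and `x2 = t E / (E - 1)`. The case `c = -1/3` is the worst
one and amounts to `x1 + x2 + 2 x1 x2 > 4`; after clearing denominators this becomes
`t sinh t + t² + 4 - 4 cosh t > 0` for `t > 0`, whose fourth derivative is `t sinh t > 0` while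
the lower derivatives all vanish at `0`. -/

open Real

lemma pos_of_hasDerivAt_of_map_zero {f f' : ℝ → ℝ} (hf : ∀ x, HasDerivAt f (f' x) x)
    (h0 : f 0 = 0) (hf' : ∀ x, 0 < x → 0 < f' x) {x : ℝ} (hx : 0 < x) : 0 < f x := by
  have hmono : StrictMonoOn f (Set.Ici 0) := by
    refine strictMonoOn_of_deriv_pos (convex_Ici 0)
      (fun y _ => (hf y).continuousAt.continuousWithinAt) fun y hy => ?_
    rw [interior_Ici] at hy
    rw [(hf y).deriv]
    exact hf' y hy
  simpa [h0] using hmono Set.self_mem_Ici hx.le hx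

lemma sinh_lt_mul_cosh {x : ℝ} (hx : 0 < x) : sinh x < x * cosh x := by
  refine sub_pos.1 (pos_of_hasDerivAt_of_map_zero (f := fun x => x * cosh x - sinh x)
    (fun x => ((hasDerivAt_id x).mul (hasDerivAt_cosh x)).sub (hasDerivAt_sinh x)
      |>.congr_deriv (by simp only [id_eq]; ring)) (by simp)
    (fun x hx => mul_pos hx (sinh_pos_iff.2 hx)) hx)

lemma two_mul_cosh_lt_mul_sinh_add_two {x : ℝ} (hx : 0 < x) : 2 * cosh x < x * sinh x + 2 := by
  refine sub_pos.1 (pos_of_hasDerivAt_of_map_zero (f := fun x => x * sinh x + 2 - 2 * cosh x)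
    (fun x => (((hasDerivAt_id x).mul (hasDerivAt_sinh x)).add_const 2).sub
      ((hasDerivAt_cosh x).const_mul 2) |>.congr_deriv (by simp only [id_eq]; ring)) (by simp)
    (fun x hx => sub_pos.2 (sinh_lt_mul_cosh hx)) hx)

lemma three_mul_sinh_lt_mul_cosh_add_two_mul {x : ℝ} (hx : 0 < x) :
    3 * sinh x < x * cosh x + 2 * x := by
  refine sub_pos.1 (pos_of_hasDerivAt_of_map_zero (f := fun x => x * cosh x + 2 * x - 3 * sinh x)
    (fun x => (((hasDerivAt_id x).mul (hasDerivAt_cosh x)).add ((hasDerivAt_id x).const_mul 2)).sub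
      ((hasDerivAt_sinh x).const_mul 3) |>.congr_deriv (by simp only [id_eq]; ring)) (by simp)
    (fun x hx => sub_pos.2 (two_mul_cosh_lt_mul_sinh_add_two hx)) hx)

lemma four_mul_cosh_lt_mul_sinh_add_sq_add_four {x : ℝ} (hx : 0 < x) :
    4 * cosh x < x * sinh x + x ^ 2 + 4 := by
  refine sub_pos.1 (pos_of_hasDerivAt_of_map_zero
    (f := fun x => x * sinh x + x ^ 2 + 4 - 4 * cosh x)
    (fun x => ((((hasDerivAt_id x).mul (hasDerivAt_sinh x)).add (hasDerivAt_pow 2 x)).add_const 4).sub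
      ((hasDerivAt_cosh x).const_mul 4) |>.congr_deriv (by simp only [id_eq]; ring)) (by simp)
    (fun x hx => sub_pos.2 (three_mul_sinh_lt_mul_cosh_add_two_mul hx)) hx)

lemma four_lt_add_add_two_mul_of_mul_exp_eq {x1 x2 : ℝ} (hlt : x1 < x2)
    (h : x1 * exp (1 - x1) = x2 * exp (1 - x2)) : 4 < x1 + x2 + 2 * x1 * x2 := by
  set t := x2 - x1 with ht
  have htpos : 0 < t := sub_pos.2 hlt
  set E := exp t
  have hx2 : x2 = x1 * E := by
    have hexp : exp (1 - x1) = E * exp (1 - x2) := by rw [← exp_add]; congr 1; ring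
    rw [hexp, ← mul_assoc] at h
    exact (mul_right_cancel₀ (exp_pos _).ne' h).symm
  have hE : 1 < E := one_lt_exp_iff.2 htpos
  have hx1E : x1 * (E - 1) = t := by linarith
  have hx2E : x2 * (E - 1) = t * E := by rw [hx2, mul_assoc, mul_comm E, ← mul_assoc, hx1E]
  have hkey := four_mul_cosh_lt_mul_sinh_add_sq_add_four htpos
  rw [cosh_eq, sinh_eq, exp_neg] at hkey
  have hkey' : 0 < t * (E ^ 2 - 1) + 2 * t ^ 2 * E - 4 * (E - 1) ^ 2 := by
    have hEpos : 0 < E := exp_pos t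
    field_simp at hkey
    nlinarith
  have hid : (x1 + x2 + 2 * x1 * x2 - 4) * (E - 1) ^ 2
      = t * (E ^ 2 - 1) + 2 * t ^ 2 * E - 4 * (E - 1) ^ 2 := by
    linear_combination (E - 1 + 2 * x2 * (E - 1)) * hx1E + (E - 1 + 2 * t) * hx2E
  have hsq : 0 < (E - 1) ^ 2 := by positivity
  nlinarith

theorem stmt13 (x1 x2 c : ℝ) (h1 : x1 ∈ Set.Ioo (0:ℝ) 1) (h2 : x2 ∈ Set.Ioi (1:ℝ))
    (h : x1 * Real.exp (1 - x1) = x2 * Real.exp (1 - x2)) (hc : c ≤ -1/3) :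
    1 - x1 * x2 + c * (1 - x1) * (x2 - 1) < 0 := by
  obtain ⟨-, hx1⟩ := h1
  have hx2 : 1 < x2 := h2
  have h4 := four_lt_add_add_two_mul_of_mul_exp_eq (hx1.trans hx2) h
  have hprod : 0 < (1 - x1) * (x2 - 1) := mul_pos (by linarith) (by linarith)
  have hc' : c * ((1 - x1) * (x2 - 1)) ≤ -1 / 3 * ((1 - x1) * (x2 - 1)) :=
    mul_le_mul_of_nonneg_right hc hprod.le
  linarith
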